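/- arXiv:1103.1437 — 10 statements merged into one kernel-verified Lean document; each statement's English description precedes it below -/
import Mathlib

section
/- Let a > 1 be an integer and n ≥ 7. Then there exists a prime p dividing a^n - 1 that does not divide a^m - 1 for any 1 ≤ m < n; moreover any such prime p satisfies p ≡ 1 (mod n). -/
/-!
A prime `p ∣ Φₙ(a)` with `p ∤ n` has `a` of order exactly `n` modulo `p`, so it is a primitive
divisor of `aⁿ - 1`; and for any primitive divisor, `n = ord_p(a)` divides `p - 1`.

Suppose every prime factor `p` of `Φₙ(a)` divides `n`. The order of `a` modulo `p` is then the
`p`-free part of `n` and divides `p - 1`, so `p` is the largest prime factor of `n`. Moreover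
`p² ∤ Φₙ(a)`, because `Φₙ(a)` divides `1 + x + ⋯ + x^(p-1)` with `x = a^(n/p) ≡ 1 (mod p)`.
Hence `Φₙ(a) = p`. On the other hand `Φₙ(a - 1) Φₙ(a + 1) ≤ Φₙ(a)²`, factor by factor over the
primitive roots, and `Φₙ(a + 1) > a^φ(n)`, so `a^φ(n) < p²` while `p - 1 ∣ φ(n)`. For `n ≥ 7`
this leaves only `n = 10`, `a = 2`, `p = 5`, where the order of `a` modulo `p` would be
`n / p = 2`, yet `2² ≢ 1 (mod 5)`.
-/

open Polynomial Finset
open scoped Nat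

theorem ZMod.natCast_pow_eq_one_iff_dvd {p a m : ℕ} (ha : 0 < a) :
    (a : ZMod p) ^ m = 1 ↔ p ∣ a ^ m - 1 := by
  rw [← Nat.modEq_iff_dvd' (Nat.one_le_pow _ _ ha), ← ZMod.natCast_eq_natCast_iff, Nat.cast_pow,
    Nat.cast_one, eq_comm]

theorem ZMod.orderOf_natCast_eq_iff {p a n : ℕ} (ha : 0 < a) (hn : 0 < n) :
    orderOf (a : ZMod p) = n ↔ p ∣ a ^ n - 1 ∧ ∀ m, 1 ≤ m → m < n → ¬ p ∣ a ^ m - 1 := by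
  simp only [orderOf_eq_iff hn, ne_eq, ZMod.natCast_pow_eq_one_iff_dvd ha]
  exact and_congr_right' ⟨fun h m hm hmn => h m hmn hm, fun h m hmn hm => h m hm hmn⟩

theorem ZMod.mod_eq_one_of_orderOf_eq {p n : ℕ} [hp : Fact p.Prime] {a : ZMod p} (hn : 1 < n)
    (ha : orderOf a = n) : p % n = 1 := by
  have ha0 : a ≠ 0 := by
    rintro rfl
    simp at ha
    omega
  have hdvd := (Nat.modEq_iff_dvd' hp.out.one_le).2 (ha ▸ ZMod.orderOf_dvd_card_sub_one ha0)
  rwa [Nat.ModEq, Nat.mod_eq_of_lt hn, eq_comm] at hdvd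

section

variable {n p : ℕ} {a : ℤ}

theorem isPrimitiveRoot_ordCompl_of_dvd_cyclotomic_eval (hp : p.Prime) (hn : n ≠ 0)
    (h : (p : ℤ) ∣ (cyclotomic n ℤ).eval a) : IsPrimitiveRoot (a : ZMod p) (ordCompl[p] n) := by
  have : Fact p.Prime := ⟨hp⟩
  have : NeZero ((ordCompl[p] n : ℕ) : ZMod p) :=
    ⟨by rw [Ne, ZMod.natCast_eq_zero_iff]; exact Nat.not_dvd_ordCompl hp hn⟩
  rw [← isRoot_cyclotomic_prime_pow_mul_iff_of_charP (k := n.factorization p),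
    Nat.ordProj_mul_ordCompl_eq_self, IsRoot.def, ← map_cyclotomic_int, eval_intCast_map,
    Int.coe_castRingHom, ZMod.intCast_zmod_eq_zero_iff_dvd]
  exact h

theorem orderOf_eq_of_dvd_cyclotomic_eval_of_not_dvd (hp : p.Prime) (hpn : ¬ p ∣ n)
    (h : (p : ℤ) ∣ (cyclotomic n ℤ).eval a) : orderOf (a : ZMod p) = n := by
  have hn : n ≠ 0 := by rintro rfl; exact hpn (dvd_zero p)
  have hζ := isPrimitiveRoot_ordCompl_of_dvd_cyclotomic_eval hp hn h
  rw [Nat.factorization_eq_zero_of_not_dvd hpn, pow_zero, Nat.div_one] at hζ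
  exact hζ.eq_orderOf.symm

theorem ordCompl_dvd_sub_one_of_dvd_cyclotomic_eval (hp : p.Prime) (hn : n ≠ 0)
    (h : (p : ℤ) ∣ (cyclotomic n ℤ).eval a) : ordCompl[p] n ∣ p - 1 := by
  have : Fact p.Prime := ⟨hp⟩
  have hζ := isPrimitiveRoot_ordCompl_of_dvd_cyclotomic_eval hp hn h
  exact hζ.eq_orderOf ▸ ZMod.orderOf_dvd_card_sub_one (hζ.ne_zero (Nat.ordCompl_pos p hn).ne')

theorem lt_of_dvd_cyclotomic_eval {q : ℕ} (hn : n ≠ 0) (hp : p.Prime) (hq : q.Prime) (hqn : q ∣ n)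
    (hne : q ≠ p) (h : (p : ℤ) ∣ (cyclotomic n ℤ).eval a) : q < p := by
  have hqp : q ∣ p - 1 := (Nat.dvd_ordCompl_of_dvd_not_dvd hqn
    fun hpq => hne ((Nat.prime_dvd_prime_iff_eq hp hq).1 hpq).symm).trans
    (ordCompl_dvd_sub_one_of_dvd_cyclotomic_eval hp hn h)
  have := Nat.le_of_dvd (Nat.sub_pos_of_lt hp.one_lt) hqp
  omega

theorem dvd_pow_div_sub_one_of_dvd_cyclotomic_eval (hp : p.Prime) (hn : n ≠ 0) (hpn : p ∣ n)
    (h : (p : ℤ) ∣ (cyclotomic n ℤ).eval a) : (p : ℤ) ∣ a ^ (n / p) - 1 := by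
  have hk : n.factorization p ≠ 0 := (hp.factorization_pos_of_dvd hn hpn).ne'
  have hcompl : ordCompl[p] n ∣ n / p := by
    refine Nat.dvd_div_of_mul_dvd ?_
    conv_rhs => rw [← Nat.ordProj_mul_ordCompl_eq_self n p]
    exact mul_dvd_mul_right (dvd_pow_self p hk) _
  rw [← ZMod.intCast_zmod_eq_zero_iff_dvd]
  push_cast
  rw [((isPrimitiveRoot_ordCompl_of_dvd_cyclotomic_eval hp hn h).pow_eq_one_iff_dvd _).2 hcompl,
    sub_self]

theorem cyclotomic_eval_dvd_geom_sum {d : ℕ} (hn : n ≠ 0) (hd : d ∣ n) (hd1 : 1 < d) (a : ℤ) :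
    (cyclotomic n ℤ).eval a ∣ ∑ i ∈ range d, (a ^ (n / d)) ^ i := by
  have ht : n / d ∈ n.properDivisors :=
    Nat.mem_properDivisors.2 ⟨Nat.div_dvd_of_dvd hd, Nat.div_lt_self (by omega) hd1⟩
  have hpoly : cyclotomic n ℤ ∣ ∑ i ∈ range d, (X ^ (n / d)) ^ i := by
    rw [← mul_dvd_mul_iff_left (X_pow_sub_C_ne_zero (Nat.pos_of_mem_properDivisors ht) (1 : ℤ)),
      map_one, mul_geom_sum, ← pow_mul, Nat.div_mul_cancel hd]
    exact X_pow_sub_one_mul_cyclotomic_dvd_X_pow_sub_one_of_dvd ℤ ht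
  simpa [eval_finsetSum] using eval_dvd (x := a) hpoly

theorem Int.not_sq_dvd_geom_sum_of_odd {x : ℤ} (hp : p.Prime) (hodd : Odd p)
    (hx : (p : ℤ) ∣ x - 1) : ¬ (p : ℤ) ^ 2 ∣ ∑ i ∈ Finset.range p, x ^ i := by
  obtain ⟨c, hc⟩ := hx
  have hS := odd_sq_dvd_geom_sum₂_sub 1 c hodd
  simp only [one_pow, mul_one, ← hc, add_sub_cancel] at hS
  intro hdvd
  have : (p : ℤ) ^ 2 ∣ p := by simpa using (dvd_sub hdvd hS)
  exact absurd (Nat.le_of_dvd hp.pos (mod_cast this)) (by nlinarith [hp.two_le])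

theorem Int.not_four_dvd_sq_add_one (y : ℤ) : ¬ 4 ∣ y ^ 2 + 1 := by
  rw [Int.dvd_iff_emod_eq_zero]
  rcases Int.even_or_odd' y with ⟨k, rfl | rfl⟩ <;> ring_nf <;> omega

theorem not_sq_dvd_cyclotomic_eval (hp : p.Prime) (hn : 2 < n) (hpn : p ∣ n)
    (h : (p : ℤ) ∣ (cyclotomic n ℤ).eval a) : ¬ (p : ℤ) ^ 2 ∣ (cyclotomic n ℤ).eval a := by
  intro hsq
  have hS := hsq.trans (cyclotomic_eval_dvd_geom_sum (by omega) hpn hp.one_lt a)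
  rcases hp.eq_two_or_odd' with rfl | hodd
  · have hpow := Nat.ordProj_mul_ordCompl_eq_self n 2
    rw [Nat.dvd_one.1 (ordCompl_dvd_sub_one_of_dvd_cyclotomic_eval hp (by omega) h),
      mul_one] at hpow
    have hk : 2 ≤ n.factorization 2 := by
      have : n.factorization 2 ≠ 1 := fun h1 => by rw [h1] at hpow; omega
      have : n.factorization 2 ≠ 0 := fun h0 => by rw [h0] at hpow; omega
      omega
    obtain ⟨u, hu⟩ : 2 ∣ n / 2 := Nat.dvd_div_of_mul_dvd (hpow ▸ Nat.pow_dvd_pow 2 hk)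
    rw [hu, pow_mul'] at hS
    simp only [sum_range_succ, sum_range_zero, pow_zero, pow_one, zero_add] at hS
    exact Int.not_four_dvd_sq_add_one _ (by rw [add_comm]; exact_mod_cast hS)
  · exact Int.not_sq_dvd_geom_sum_of_odd hp hodd
      (dvd_pow_div_sub_one_of_dvd_cyclotomic_eval hp (by omega) hpn h) hS

theorem natAbs_cyclotomic_eval_dvd_of_forall_dvd (hn : 2 < n) (hp : p.Prime)
    (hpΦ : (p : ℤ) ∣ (cyclotomic n ℤ).eval a)
    (hall : ∀ q : ℕ, q.Prime → (q : ℤ) ∣ (cyclotomic n ℤ).eval a → q ∣ n) :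
    ((cyclotomic n ℤ).eval a).natAbs ∣ p := by
  have hΦ0 : ((cyclotomic n ℤ).eval a).natAbs ≠ 0 := Int.natAbs_ne_zero.2 (cyclotomic_pos hn a).ne'
  have hunique : ∀ {q : ℕ}, q.Prime → q ∣ ((cyclotomic n ℤ).eval a).natAbs → q = p := by
    intro q hq hqΦ
    by_contra hne
    have hqΦ := Int.natCast_dvd.2 hqΦ
    exact (lt_of_dvd_cyclotomic_eval (n := n) (by omega) hp hq (hall q hq hqΦ) hne hpΦ).not_gt
      (lt_of_dvd_cyclotomic_eval (by omega) hq hp (hall p hp hpΦ) (Ne.symm hne) hqΦ)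
  have hpow := Nat.eq_prime_pow_of_unique_prime_dvd hΦ0 hunique
  rw [hpow]
  refine (Nat.pow_dvd_pow_iff_le_right hp.one_lt).2 ?_ |>.trans (pow_one p).dvd
  by_contra! h2
  refine not_sq_dvd_cyclotomic_eval hp hn (hall p hp hpΦ) hpΦ ?_
  rw [← Nat.cast_pow, Int.natCast_dvd, hpow]
  exact Nat.pow_dvd_pow p h2

end

section

variable {n : ℕ}

theorem abs_cyclotomic_eval_eq_prod_norm_sub (hn : n ≠ 0) (x : ℝ) :
    |(cyclotomic n ℝ).eval x| = ∏ μ ∈ primitiveRoots n ℂ, ‖(x : ℂ) - μ‖ := by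
  have hζ := Complex.isPrimitiveRoot_exp n hn
  rw [← Real.norm_eq_abs, ← Complex.norm_real, ← cyclotomic.eval_apply_ofReal,
    cyclotomic_eq_prod_X_sub_primitiveRoots hζ, eval_prod, norm_prod]
  simp

theorem Complex.norm_sub_mul_norm_sub_le_sq {μ : ℂ} (hμ : ‖μ‖ = 1) {b : ℝ} (hb : 2 ≤ b) :
    ‖((b - 1 : ℝ) : ℂ) - μ‖ * ‖((b + 1 : ℝ) : ℂ) - μ‖ ≤ ‖(b : ℂ) - μ‖ ^ 2 := by
  have hnormSq : ∀ x : ℝ, ‖(x : ℂ) - μ‖ ^ 2 = (x - μ.re) ^ 2 + μ.im ^ 2 := fun x => by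
    rw [Complex.sq_norm, Complex.normSq_apply]
    simp only [Complex.sub_re, Complex.ofReal_re, Complex.sub_im, Complex.ofReal_im]
    ring
  have hunit : μ.re ^ 2 + μ.im ^ 2 = 1 := by
    have := Complex.sq_norm μ
    rw [hμ, Complex.normSq_apply] at this
    linarith
  refine le_of_pow_le_pow_left₀ two_ne_zero (by positivity) ?_
  -- with `u = ‖b - μ‖²` the left side is `(u + 1)² - 4 (b - re μ)²`, so the claim
  -- amounts to `2 (im μ)² + 1 ≤ 2 (b - re μ)²`
  rw [mul_pow, hnormSq, hnormSq, hnormSq]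
  have hre : μ.re ≤ 1 := by nlinarith [sq_nonneg μ.im, sq_nonneg (μ.re - 1)]
  nlinarith [mul_nonneg (by linarith : (0:ℝ) ≤ b - 2) (by linarith : (0:ℝ) ≤ b + 2 - 2 * μ.re),
    sq_nonneg (μ.re - 1), sq_nonneg μ.im]

theorem abs_cyclotomic_eval_sub_one_mul_eval_add_one_le_sq (hn : n ≠ 0) {b : ℝ} (hb : 2 ≤ b) :
    |(cyclotomic n ℝ).eval (b - 1) * (cyclotomic n ℝ).eval (b + 1)| ≤
      (cyclotomic n ℝ).eval b ^ 2 := by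
  rw [abs_mul, ← sq_abs]
  simp only [abs_cyclotomic_eval_eq_prod_norm_sub hn, ← prod_mul_distrib, ← prod_pow]
  refine prod_le_prod (fun _ _ => by positivity) fun μ hμ => ?_
  exact Complex.norm_sub_mul_norm_sub_le_sq
    (((mem_primitiveRoots (Nat.pos_of_ne_zero hn)).1 hμ).norm'_eq_one hn) hb

theorem pow_totient_lt_cyclotomic_eval_sq (hn : 2 < n) {a : ℤ} (ha : 2 ≤ a) :
    a ^ φ n < (cyclotomic n ℤ).eval a ^ 2 := by
  have hcast : ∀ x : ℤ, (((cyclotomic n ℤ).eval x : ℤ) : ℝ) = (cyclotomic n ℝ).eval (x : ℝ) :=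
    fun x => by simpa using (cyclotomic.eval_apply x n (Int.castRingHom ℝ)).symm
  have hlow : a ^ φ n < (cyclotomic n ℤ).eval (a + 1) := by
    have := sub_one_pow_totient_lt_cyclotomic_eval (n := n) (q := (a : ℝ) + 1) (by omega)
      (by have : (2 : ℝ) ≤ a := mod_cast ha; linarith)
    rw [add_sub_cancel_right] at this
    rw [← Int.cast_lt (R := ℝ)]
    push_cast [hcast]
    exact this
  have hconcave : (cyclotomic n ℤ).eval (a - 1) * (cyclotomic n ℤ).eval (a + 1) ≤
      (cyclotomic n ℤ).eval a ^ 2 := by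
    have := (le_abs_self _).trans <|
      abs_cyclotomic_eval_sub_one_mul_eval_add_one_le_sq (n := n) (by omega) (b := a) (mod_cast ha)
    rw [← Int.cast_le (R := ℝ)]
    push_cast [hcast]
    exact this
  have hone : 1 ≤ (cyclotomic n ℤ).eval (a - 1) := by
    have := cyclotomic_pos hn (a - 1)
    omega
  calc a ^ φ n < (cyclotomic n ℤ).eval (a + 1) := hlow
    _ ≤ (cyclotomic n ℤ).eval (a - 1) * (cyclotomic n ℤ).eval (a + 1) :=
      le_mul_of_one_le_left (cyclotomic_pos hn _).le hone
    _ ≤ (cyclotomic n ℤ).eval a ^ 2 := hconcave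

end

theorem Nat.sq_lt_two_pow_sub_one {x : ℕ} (hx : 7 ≤ x) : x ^ 2 < 2 ^ (x - 1) := by
  induction x, hx using Nat.le_induction with
  | base => norm_num
  | succ x hx ih =>
    calc (x + 1) ^ 2 ≤ 2 * x ^ 2 := by nlinarith
      _ < 2 * 2 ^ (x - 1) := by omega
      _ = 2 ^ (x + 1 - 1) := by rw [← pow_succ']; congr 1; omega

theorem Nat.Prime.eq_one_and_le_five_of_two_pow_totient_lt_sq {p k : ℕ} (hp : p.Prime)
    (hk : k ≠ 0) (h : 2 ^ φ (p ^ k) < p ^ 2) : k = 1 ∧ p ≤ 5 := by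
  rw [Nat.totient_prime_pow hp (Nat.pos_of_ne_zero hk)] at h
  have hp5 : p ≤ 5 := by
    by_contra! hp6
    have hp7 : 7 ≤ p := by
      have : p ≠ 6 := by rintro rfl; norm_num at hp
      omega
    have hexp : p - 1 ≤ p ^ (k - 1) * (p - 1) := Nat.le_mul_of_pos_left _ (pow_pos hp.pos _)
    exact h.not_ge ((Nat.sq_lt_two_pow_sub_one hp7).le.trans (Nat.pow_le_pow_right two_pos hexp))
  refine ⟨?_, hp5⟩
  by_contra hk1
  have hexp : p * (p - 1) ≤ p ^ (k - 1) * (p - 1) :=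
    Nat.mul_le_mul_right _ (Nat.le_self_pow (by omega) p)
  have := (Nat.pow_le_pow_right two_pos hexp).trans_lt h
  interval_cases p <;> norm_num at this

theorem Nat.Prime.eq_five_of_pow_totient_lt_sq {p k m a : ℕ} (hp : p.Prime) (hk : k ≠ 0)
    (hm : m ∣ p - 1) (hn : 7 ≤ p ^ k * m) (ha : 2 ≤ a) (h : a ^ φ (p ^ k * m) < p ^ 2) :
    p = 5 ∧ k = 1 ∧ m = 2 ∧ a = 2 := by
  have hm0 : m ≠ 0 := by rintro rfl; simp at hn
  have h2 : 2 ^ φ (p ^ k) < p ^ 2 := calc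
    2 ^ φ (p ^ k) ≤ 2 ^ φ (p ^ k * m) :=
      Nat.pow_le_pow_right two_pos
        (Nat.le_of_dvd (Nat.totient_pos.2 (by positivity)) (Nat.totient_dvd_of_dvd ⟨m, rfl⟩))
    _ ≤ a ^ φ (p ^ k * m) := Nat.pow_le_pow_left ha _
    _ < p ^ 2 := h
  obtain ⟨rfl, hp5⟩ := hp.eq_one_and_le_five_of_two_pow_totient_lt_sq hk h2
  have hmp : m ≤ p - 1 := Nat.le_of_dvd (by have := hp.two_le; omega) hm
  rw [pow_one] at hn h
  interval_cases p <;> norm_num at hp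
  · omega
  · omega
  · have hm24 : m = 2 ∨ m = 4 := by interval_cases m <;> simp_all
    rcases hm24 with rfl | rfl
    · have h10 : φ 10 = 4 := by decide
      rw [h10] at h
      have : a < 3 := by
        by_contra! ha3
        have := Nat.pow_le_pow_left ha3 4
        omega
      omega
    · have h20 : φ 20 = 8 := by decide
      rw [h20] at h
      have := Nat.pow_le_pow_left ha 8
      omega

theorem exists_prime_dvd_cyclotomic_eval_not_dvd {a n : ℕ} (ha : 2 ≤ a) (hn : 7 ≤ n) :
    ∃ p : ℕ, p.Prime ∧ (p : ℤ) ∣ (cyclotomic n ℤ).eval (a : ℤ) ∧ ¬ p ∣ n := by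
  by_contra! hall
  have hn0 : n ≠ 0 := by omega
  have hsize : a ^ φ n < ((cyclotomic n ℤ).eval (a : ℤ)).natAbs ^ 2 := by
    have := pow_totient_lt_cyclotomic_eval_sq (n := n) (by omega) (a := a) (mod_cast ha)
    rw [← Int.natAbs_sq] at this
    exact_mod_cast this
  have hΦ : ((cyclotomic n ℤ).eval (a : ℤ)).natAbs ≠ 1 := by
    intro h1
    rw [h1, one_pow] at hsize
    exact hsize.not_ge (Nat.one_le_pow _ _ (by omega))
  obtain ⟨p, hp, hpΦ⟩ : ∃ p : ℕ, p.Prime ∧ (p : ℤ) ∣ (cyclotomic n ℤ).eval (a : ℤ) :=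
    ⟨_, Nat.minFac_prime hΦ, Int.natCast_dvd.2 (Nat.minFac_dvd _)⟩
  have hsize : a ^ φ n < p ^ 2 := hsize.trans_le <| Nat.pow_le_pow_left
    (Nat.le_of_dvd hp.pos (natAbs_cyclotomic_eval_dvd_of_forall_dvd (by omega) hp hpΦ hall)) 2
  have hpm : (a : ZMod p) ^ ordCompl[p] n = 1 := by
    simpa using (isPrimitiveRoot_ordCompl_of_dvd_cyclotomic_eval hp hn0 hpΦ).pow_eq_one
  rw [← Nat.ordProj_mul_ordCompl_eq_self n p] at hn hsize
  obtain ⟨rfl, -, hm2, rfl⟩ := hp.eq_five_of_pow_totient_lt_sq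
    (hp.factorization_pos_of_dvd hn0 (hall p hp hpΦ)).ne'
    (ordCompl_dvd_sub_one_of_dvd_cyclotomic_eval hp hn0 hpΦ) hn ha hsize
  rw [hm2] at hpm
  exact absurd hpm (by decide : ((2 : ℕ) : ZMod 5) ^ 2 ≠ 1)

theorem bang_primitive_divisor (a n : ℕ) (ha : 1 < a) (hn : 7 ≤ n) :
    (∃ p : ℕ, p.Prime ∧ p ∣ a ^ n - 1 ∧
      ∀ m : ℕ, 1 ≤ m → m < n → ¬ p ∣ a ^ m - 1) ∧
    (∀ p : ℕ, p.Prime → p ∣ a ^ n - 1 →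
      (∀ m : ℕ, 1 ≤ m → m < n → ¬ p ∣ a ^ m - 1) → p % n = 1) := by
  have ha0 : 0 < a := by omega
  have hn0 : 0 < n := by omega
  refine ⟨?_, fun p hp hdvd hmin => ?_⟩
  · obtain ⟨p, hp, hpΦ, hpn⟩ := exists_prime_dvd_cyclotomic_eval_not_dvd ha hn
    have hord := orderOf_eq_of_dvd_cyclotomic_eval_of_not_dvd hp hpn hpΦ
    rw [Int.cast_natCast] at hord
    exact ⟨p, hp, (ZMod.orderOf_natCast_eq_iff ha0 hn0).1 hord⟩
  · have : Fact p.Prime := ⟨hp⟩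
    exact ZMod.mod_eq_one_of_orderOf_eq (by omega)
      ((ZMod.orderOf_natCast_eq_iff ha0 hn0).2 ⟨hdvd, hmin⟩)
end

section
/- Let p and q be odd primes, and let m ≥ 2, λ ≥ 1, β ≥ 0 be integers such that (p^(λ+1) - 1)/(p - 1) = m·q^β. Then λ + 1 ≤ m². -/
/-!
Write `n = λ + 1` and `S a = ∑ i < a, p ^ i`, so that `S n = m * q ^ β`.

If `n` is prime, let `ℓ` be a prime factor of `m`. Then `ℓ ∣ S n`, so either `p ≡ 1 [MOD ℓ]`,
whence `S n ≡ n` and `ℓ = n`, or `p` has order `n` modulo `ℓ`, whence `n ∣ ℓ - 1`. Either way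
`n ≤ ℓ ≤ m`.

Otherwise `n = d * f` with `2 ≤ f ≤ d`, and `S n = S d * T` with `T = ∑ j < f, (p ^ d) ^ j`.
If `q ∤ S d`, then `S d ∣ m` and `n ≤ d ^ 2 ≤ (S d) ^ 2 ≤ m ^ 2`. If `q ∣ S d`, then
`p ^ d ≡ 1 [MOD q]` and lifting the exponent gives `v_q T = v_q f`; as the `q`-free part of `T`
divides `m`, this yields `3 ^ (d * (f - 1)) ≤ T ≤ f * m`, which is only possible if `n ≤ m ^ 2`.
-/

open Finset

theorem Nat.cube_le_three_pow (n : ℕ) : n ^ 3 ≤ 3 ^ n := by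
  induction n with
  | zero => norm_num
  | succ k ih =>
    rcases Nat.lt_or_ge k 3 with hk | hk
    · interval_cases k <;> norm_num
    · calc (k + 1) ^ 3 ≤ 3 * k ^ 3 := by nlinarith [sq_nonneg k]
        _ ≤ 3 ^ (k + 1) := by rw [_root_.pow_succ' 3 k]; exact Nat.mul_le_mul_left 3 ih

theorem mul_le_sq_of_three_pow_le {d f m : ℕ} (hf : 2 ≤ f) (h : 3 ^ (d * (f - 1)) ≤ f * m) :
    d * f ≤ m ^ 2 := by
  rcases Nat.eq_zero_or_pos d with rfl | hd
  · simp
  have key : d * f * f ^ 2 ≤ m ^ 2 * f ^ 2 := calc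
    d * f * f ^ 2 ≤ d * f * (d * f) ^ 2 := by gcongr; exact Nat.le_mul_of_pos_left f hd
    _ = (d * f) ^ 3 := by ring
    _ ≤ 3 ^ (d * f) := Nat.cube_le_three_pow _
    _ ≤ 3 ^ (d * (f - 1) * 2) :=
      Nat.pow_le_pow_right (by norm_num) (by rw [mul_assoc]; exact Nat.mul_le_mul_left d (by omega))
    _ = (3 ^ (d * (f - 1))) ^ 2 := pow_mul _ _ _
    _ ≤ (f * m) ^ 2 := Nat.pow_le_pow_left h 2
    _ = m ^ 2 * f ^ 2 := by ring
  exact Nat.le_of_mul_le_mul_right key (by positivity)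

theorem geom_sum_range_mul {R : Type*} [CommSemiring R] (x : R) (d f : ℕ) :
    ∑ i ∈ range (d * f), x ^ i = (∑ i ∈ range d, x ^ i) * ∑ j ∈ range f, (x ^ d) ^ j := by
  induction f with
  | zero => simp
  | succ f ih =>
    rw [Nat.mul_succ, sum_range_add, ih, sum_range_succ, mul_add]
    congr 1
    rw [sum_mul]
    exact sum_congr rfl fun i _ => by ring

theorem padicValNat_geom_sum_of_dvd_sub_one {q x k : ℕ} [hq : Fact q.Prime] (hqodd : Odd q)
    (hx : 1 < x) (hqx : q ∣ x - 1) (hk : k ≠ 0) :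
    padicValNat q (∑ j ∈ range k, x ^ j) = padicValNat q k := by
  have hqx' : ¬ q ∣ x := fun h ↦ hq.out.not_dvd_one <| by
    simpa [Nat.sub_sub_self hx.le] using Nat.dvd_sub h hqx
  have hsum : ∑ j ∈ range k, x ^ j ≠ 0 :=
    (sum_pos (fun _ _ ↦ by positivity) (nonempty_range_iff.2 hk)).ne'
  have hlte := padicValNat.pow_sub_pow hqodd hx (by simpa using hqx) hqx' hk
  rw [one_pow, ← geom_sum_mul_of_one_le hx.le, padicValNat.mul hsum (by omega)] at hlte
  omega

theorem le_pow_padicValNat_mul_of_dvd_mul_pow {a m q β : ℕ} (hq : q.Prime) (hm : m ≠ 0)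
    (h : a ∣ m * q ^ β) : a ≤ q ^ padicValNat q a * m := by
  rcases eq_or_ne a 0 with rfl | ha
  · exact Nat.zero_le _
  have hcompl : ordCompl[q] a ∣ m :=
    ((Nat.coprime_ordCompl hq ha).pow_left β).symm.dvd_of_dvd_mul_right
      ((Nat.ordCompl_dvd a q).trans h)
  calc a = q ^ a.factorization q * ordCompl[q] a := (Nat.ordProj_mul_ordCompl_eq_self a q).symm
    _ ≤ q ^ a.factorization q * m := Nat.mul_le_mul_left _ (Nat.le_of_dvd (by omega) hcompl)
    _ = q ^ padicValNat q a * m := by rw [Nat.factorization_def a hq]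

theorem le_of_prime_dvd_geom_sum {x n ℓ : ℕ} (hn : n.Prime) (hℓ : ℓ.Prime)
    (h : ℓ ∣ ∑ i ∈ range n, x ^ i) : n ≤ ℓ := by
  have := Fact.mk hℓ
  have hsum : ∑ i ∈ range n, (x : ZMod ℓ) ^ i = 0 := by
    exact_mod_cast (ZMod.natCast_eq_zero_iff _ _).2 h
  have hpow : (x : ZMod ℓ) ^ n = 1 := by
    have := geom_sum_mul (x : ZMod ℓ) n
    rwa [hsum, zero_mul, eq_comm, sub_eq_zero] at this
  rcases hn.eq_one_or_self_of_dvd _ (orderOf_dvd_of_pow_eq_one hpow) with hord | hord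
  · rw [orderOf_eq_one_iff] at hord
    simp only [hord, one_pow, sum_const, card_range, nsmul_eq_mul, mul_one,
      ZMod.natCast_eq_zero_iff] at hsum
    exact ((Nat.prime_dvd_prime_iff_eq hℓ hn).1 hsum).ge
  · have hx0 : (x : ZMod ℓ) ≠ 0 := by
      rintro h0
      simp [h0, hn.ne_zero] at hpow
    have := Nat.le_of_dvd (Nat.sub_pos_of_lt hℓ.one_lt) (hord ▸ ZMod.orderOf_dvd_card_sub_one hx0)
    omega

theorem mul_le_sq_of_dvd_geom_sum {p q m β d f : ℕ} [hq : Fact q.Prime] (hp : 3 ≤ p)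
    (hqodd : Odd q) (hm : m ≠ 0) (hf : 2 ≤ f) (hqd : q ∣ ∑ i ∈ range d, p ^ i)
    (hT : ∑ j ∈ range f, (p ^ d) ^ j ∣ m * q ^ β) : d * f ≤ m ^ 2 := by
  rcases Nat.eq_zero_or_pos d with rfl | hd
  · simp
  have hqx : q ∣ p ^ d - 1 := hqd.trans ⟨p - 1, (geom_sum_mul_of_one_le (by omega) d).symm⟩
  have hval := padicValNat_geom_sum_of_dvd_sub_one hqodd
    (Nat.one_lt_pow hd.ne' (by omega)) hqx (by omega : f ≠ 0)
  apply mul_le_sq_of_three_pow_le hf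
  calc 3 ^ (d * (f - 1)) ≤ (p ^ d) ^ (f - 1) := by rw [pow_mul]; gcongr
    _ ≤ ∑ j ∈ range f, (p ^ d) ^ j :=
      single_le_sum (fun _ _ ↦ Nat.zero_le _) (mem_range.2 (by omega))
    _ ≤ q ^ padicValNat q f * m := hval ▸ le_pow_padicValNat_mul_of_dvd_mul_pow hq.out hm hT
    _ ≤ f * m := Nat.mul_le_mul_right m (Nat.le_of_dvd (by omega) pow_padicValNat_dvd)

theorem Nat.exists_le_mul_eq_of_not_prime {n : ℕ} (hn : 2 ≤ n) (hnp : ¬ n.Prime) :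
    ∃ d f, 2 ≤ f ∧ f ≤ d ∧ d * f = n := by
  refine ⟨n / n.minFac, n.minFac, (Nat.minFac_prime (by omega)).two_le, ?_,
    Nat.div_mul_cancel (Nat.minFac_dvd n)⟩
  rw [Nat.le_div_iff_mul_le n.minFac_pos, ← sq]
  exact Nat.minFac_sq_le_self (by omega) hnp

theorem lambda_bound_of_sigma_eq_mul_prime_pow
    (p q m l β : ℕ) (hp : p.Prime) (hq : q.Prime)
    (hpodd : Odd p) (hqodd : Odd q) (hm : 2 ≤ m) (hl : 1 ≤ l)
    (heq : ∑ i ∈ Finset.range (l + 1), p ^ i = m * q ^ β) :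
    l + 1 ≤ m ^ 2 := by
  by_cases hn : (l + 1).Prime
  · obtain ⟨ℓ, hℓ, hℓm⟩ := Nat.exists_prime_and_dvd (show m ≠ 1 by omega)
    have hnℓ := le_of_prime_dvd_geom_sum hn hℓ (heq ▸ hℓm.mul_right _)
    have hℓm := Nat.le_of_dvd (by omega) hℓm
    nlinarith
  obtain ⟨d, f, hf, hfd, hdf⟩ := Nat.exists_le_mul_eq_of_not_prime (by omega) hn
  rw [← hdf, geom_sum_range_mul] at heq
  rw [← hdf]
  by_cases hqd : q ∣ ∑ i ∈ range d, p ^ i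
  · have hp3 : 3 ≤ p := by
      have := hp.two_le
      obtain ⟨k, rfl⟩ := hpodd
      omega
    have := Fact.mk hq
    exact mul_le_sq_of_dvd_geom_sum hp3 hqodd (by omega) hf hqd (Dvd.intro_left _ heq)
  · have hSm : ∑ i ∈ range d, p ^ i ≤ m := by
      simpa [padicValNat.eq_zero_of_not_dvd hqd] using
        le_pow_padicValNat_mul_of_dvd_mul_pow hq (by omega) (Dvd.intro _ heq)
    have hdS : d ≤ ∑ i ∈ range d, p ^ i := calc
      d = ∑ _i ∈ range d, 1 := by simp
      _ ≤ ∑ i ∈ range d, p ^ i := sum_le_sum fun _ _ ↦ Nat.one_le_pow _ _ hp.pos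
    nlinarith
end

section
/- Let p, q be odd primes and λ, β, α positive integers such that (p^(λ+1) - 1)/(p - 1) = q^β and p^λ divides (q^(α+1) - 1)/(q - 1). Then p^(λ-1) divides α + 1. -/
/-!
Since `q ^ β = 1 + p + ⋯ + p ^ l ≡ 1 + p [MOD p ^ 2]`, the valuation `v_p (q ^ β - 1)` is
exactly `1`. The lifting-the-exponent lemma, applied at `g = gcd β (α + 1)` (where
`p ∣ q ^ g - 1`), gives `v_p (q ^ (α + 1) - 1) ≤ v_p (q ^ β - 1) + v_p (α + 1) = 1 + v_p (α + 1)`,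
while `p ^ l` divides `q ^ (α + 1) - 1 = (q - 1) (1 + q + ⋯ + q ^ α)`.
-/

open Finset

section

variable {p : ℕ} [hp : Fact p.Prime]

theorem not_dvd_geom_sum_self (n : ℕ) : ¬ p ∣ ∑ i ∈ range (n + 1), p ^ i := by
  rw [← ZMod.natCast_eq_zero_iff]
  simp [sum_range_succ']

theorem padicValNat_geom_sum_self_sub_one {l : ℕ} (hl : 0 < l) :
    padicValNat p (∑ i ∈ range (l + 1), p ^ i - 1) = 1 := by
  obtain ⟨n, rfl⟩ := Nat.exists_eq_add_of_lt hl
  have hsum : ∑ i ∈ range (n + 2), p ^ i - 1 = p * ∑ i ∈ range (n + 1), p ^ i := by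
    rw [sum_range_succ' _ (n + 1), mul_sum]
    simp [pow_succ, mul_comm]
  rw [zero_add, hsum, padicValNat.mul hp.out.ne_zero, padicValNat_self,
    padicValNat.eq_zero_of_not_dvd (not_dvd_geom_sum_self n)]
  exact (not_dvd_geom_sum_self n <| · ▸ dvd_zero p)

theorem not_dvd_of_dvd_sub_one {n : ℕ} (hn : n ≠ 0) (h : p ∣ n - 1) : ¬ p ∣ n := fun h' =>
  hp.out.not_dvd_one <| (Nat.dvd_sub_iff_right (Nat.one_le_iff_ne_zero.mpr hn) h').mp h

theorem padicValNat_pow_mul_sub_one (hp1 : Odd p) {x d n : ℕ} (hx : 1 < x) (hd : d ≠ 0)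
    (hpd : p ∣ x ^ d - 1) (hn : n ≠ 0) :
    padicValNat p (x ^ (d * n) - 1) = padicValNat p (x ^ d - 1) + padicValNat p n := by
  have hxd : 1 < x ^ d := Nat.one_lt_pow hd hx
  simpa [pow_mul] using padicValNat.pow_sub_pow (y := 1) hp1 hxd (by simpa using hpd)
    (not_dvd_of_dvd_sub_one (by omega) hpd) hn

theorem padicValNat_pow_sub_one_le_add (hp1 : Odd p) {x a b : ℕ} (hx : 1 < x) (ha : a ≠ 0)
    (hb : b ≠ 0) (hpa : p ∣ x ^ a - 1) (hpb : p ∣ x ^ b - 1) :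
    padicValNat p (x ^ b - 1) ≤ padicValNat p (x ^ a - 1) + padicValNat p b := by
  set g := a.gcd b
  have hga : g ∣ a := Nat.gcd_dvd_left a b
  have hgb : g ∣ b := Nat.gcd_dvd_right a b
  have hg : g ≠ 0 := Nat.gcd_ne_zero_left ha
  have hpg : p ∣ x ^ g - 1 := Nat.pow_sub_one_gcd_pow_sub_one x a b ▸ Nat.dvd_gcd hpa hpb
  have hva := padicValNat_pow_mul_sub_one hp1 hx hg hpg
    ((Nat.div_ne_zero_iff_of_dvd hga).mpr ⟨ha, hg⟩)
  have hvb := padicValNat_pow_mul_sub_one hp1 hx hg hpg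
    ((Nat.div_ne_zero_iff_of_dvd hgb).mpr ⟨hb, hg⟩)
  rw [Nat.mul_div_cancel' hga] at hva
  rw [Nat.mul_div_cancel' hgb] at hvb
  have hvb_div := padicValNat.div_of_dvd (p := p) hgb
  omega

end

theorem exponent_divisibility_general
    (p q l β α : ℕ) (hp : p.Prime) (hq : q.Prime)
    (hpodd : Odd p) (hl : 0 < l) (hβ : 0 < β)
    (heq : ∑ i ∈ Finset.range (l + 1), p ^ i = q ^ β)
    (hdvd : p ^ l ∣ ∑ i ∈ Finset.range (α + 1), q ^ i) :
    p ^ (l - 1) ∣ α + 1 := by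
  have := Fact.mk hp
  have hvβ : padicValNat p (q ^ β - 1) = 1 := heq ▸ padicValNat_geom_sum_self_sub_one hl
  have hpβ : p ∣ q ^ β - 1 := dvd_of_one_le_padicValNat hvβ.ge
  have hplα : p ^ l ∣ q ^ (α + 1) - 1 :=
    hdvd.trans (Dvd.intro _ (geom_sum_mul_of_one_le hq.pos _))
  have hpα : p ∣ q ^ (α + 1) - 1 := (dvd_pow_self p hl.ne').trans hplα
  have hle := padicValNat_pow_sub_one_le_add hpodd hq.one_lt hβ.ne' α.add_one_ne_zero hpβ hpα
  have hqα : q ^ (α + 1) - 1 ≠ 0 :=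
    Nat.sub_ne_zero_of_lt (Nat.one_lt_pow α.add_one_ne_zero hq.one_lt)
  have hlv : l ≤ padicValNat p (q ^ (α + 1) - 1) := (padicValNat_dvd_iff_le hqα).mp hplα
  exact (padicValNat_dvd_iff_le α.add_one_ne_zero).mpr (by omega)

theorem exponent_divisibility
    (p q l β α : ℕ) (hp : p.Prime) (hq : q.Prime)
    (hpodd : Odd p) (hqodd : Odd q) (hl : 0 < l) (hβ : 0 < β) (hα : 0 < α)
    (heq : ∑ i ∈ Finset.range (l + 1), p ^ i = q ^ β)
    (hdvd : p ^ l ∣ ∑ i ∈ Finset.range (α + 1), q ^ i) :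
    p ^ (l - 1) ∣ α + 1 :=
  exponent_divisibility_general p q l β α hp hq hpodd hl hβ heq hdvd
end

section
/- There is no odd prime p and integer β ≥ 0 such that p² + p + 1 = 5^β. -/
theorem ZMod.five_sq_add_self_add_one_ne_zero (x : ZMod 5) : x ^ 2 + x + 1 ≠ 0 := by
  revert x
  decide

theorem Nat.not_five_dvd_sq_add_self_add_one (n : ℕ) : ¬ 5 ∣ n ^ 2 + n + 1 := by
  rw [← ZMod.natCast_eq_zero_iff]
  push_cast
  exact ZMod.five_sq_add_self_add_one_ne_zero n

theorem no_sol_quad_pow5 :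
    ¬ ∃ (p β : ℕ), p.Prime ∧ Odd p ∧ p ^ 2 + p + 1 = 5 ^ β := by
  rintro ⟨p, β, hp, -, h⟩
  cases β with
  | zero => exact hp.ne_zero (by simpa using h)
  | succ n => exact Nat.not_five_dvd_sq_add_self_add_one p (h ▸ dvd_pow_self 5 n.succ_ne_zero)
end

section
/- There is no odd prime p and integer β ≥ 0 such that p⁴ + p³ + p² + p + 1 = 3^β. -/
/-! The value Φ₅(p) = p⁴ + p³ + p² + p + 1 is never divisible by 3 (check the three residues),
so it could only equal 3⁰ = 1, which forces p = 0. -/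

theorem ZMod.cyclotomic_five_ne_zero (x : ZMod 3) : x ^ 4 + x ^ 3 + x ^ 2 + x + 1 ≠ 0 := by
  revert x
  decide

theorem Nat.not_three_dvd_cyclotomic_five (n : ℕ) : ¬ 3 ∣ n ^ 4 + n ^ 3 + n ^ 2 + n + 1 := by
  rw [← ZMod.natCast_eq_zero_iff]
  push_cast
  exact ZMod.cyclotomic_five_ne_zero n

theorem no_sol_quart_pow3 :
    ¬ ∃ (p β : ℕ), p.Prime ∧ Odd p ∧
      p ^ 4 + p ^ 3 + p ^ 2 + p + 1 = 3 ^ β := by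
  rintro ⟨p, β, hp, -, h⟩
  cases β with
  | zero =>
    have := hp.pos
    simp only [pow_zero] at h
    omega
  | succ k =>
    exact Nat.not_three_dvd_cyclotomic_five p (h ▸ dvd_pow_self 3 k.succ_ne_zero)
end

section
/- There is no odd prime p and integer β ≥ 0 such that p⁴ + p³ + p² + p + 1 = 5^β. -/
/-! The value `x⁴ + x³ + x² + x + 1` is divisible by `5` only for `x ≡ 1 [ZMOD 5]`, and writing
`x = 1 + 5t` shows it is then `≡ 5 [ZMOD 25]`; so it is never divisible by `25`. For `x ≥ 2` the value
exceeds `5`, so it cannot be a power of `5`. -/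

theorem Int.not_twentyFive_dvd_quartic (x : ℤ) : ¬ (25 : ℤ) ∣ x ^ 4 + x ^ 3 + x ^ 2 + x + 1 := by
  have hmod : ∀ y : ZMod 25, y ^ 4 + y ^ 3 + y ^ 2 + y + 1 ≠ 0 := by decide
  intro hdvd
  apply hmod x
  exact_mod_cast (ZMod.intCast_zmod_eq_zero_iff_dvd _ 25).mpr hdvd

theorem Nat.quartic_ne_five_pow {n : ℕ} (hn : 2 ≤ n) (β : ℕ) :
    n ^ 4 + n ^ 3 + n ^ 2 + n + 1 ≠ 5 ^ β := by
  intro heq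
  have hβ : 2 ≤ β := by
    have : 2 ^ 4 ≤ n ^ 4 := Nat.pow_le_pow_left hn 4
    by_contra! hβ
    interval_cases β <;> omega
  have hdvd : 25 ∣ n ^ 4 + n ^ 3 + n ^ 2 + n + 1 := heq ▸ pow_dvd_pow 5 hβ
  exact Int.not_twentyFive_dvd_quartic n (by exact_mod_cast hdvd)

theorem no_sol_quart_pow5 :
    ¬ ∃ (p β : ℕ), p.Prime ∧ Odd p ∧
      p ^ 4 + p ^ 3 + p ^ 2 + p + 1 = 5 ^ β := by
  rintro ⟨p, β, hp, -, heq⟩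
  exact Nat.quartic_ne_five_pow hp.two_le β heq
end

section
/- Let p be an odd prime and q ∈ {3, 5} with (p^(λ+1) - 1)/(p - 1) = q^β for some integers λ ≥ 2 with λ even, and β ≥ 1. Then no such p, λ, β exist. -/
/-!
Since `q ∣ 1 + p + ⋯ + p^λ`, the residue of `p` mod `q` has order dividing the odd number
`λ + 1` and also `q - 1`, a power of two; hence `p ≡ 1 (mod q)`. Lifting the exponent then gives
`v_q(1 + p + ⋯ + p^λ) = v_q(λ + 1)`, so `q^β` divides `λ + 1`, which is absurd because
`q^β = 1 + p + ⋯ + p^λ > λ + 1`.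
-/

open Finset

lemma ZMod.eq_one_of_pow_eq_one_of_coprime {q : ℕ} [Fact q.Prime] {a : ZMod q} {n : ℕ}
    (hn : n ≠ 0) (hcop : n.Coprime (q - 1)) (ha : a ^ n = 1) : a = 1 := by
  have ha0 : a ≠ 0 := by
    rintro rfl
    simp [zero_pow hn] at ha
  have hfermat : a ^ (q - 1) = 1 := ZMod.pow_card_sub_one_eq_one ha0
  simpa [hcop.gcd_eq_one] using pow_gcd_eq_one.mpr ⟨ha, hfermat⟩

lemma dvd_sub_one_of_dvd_geom_sum {p q n : ℕ} [Fact q.Prime] (hn : n ≠ 0)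
    (hcop : n.Coprime (q - 1)) (hdvd : q ∣ ∑ i ∈ range n, p ^ i) : q ∣ p - 1 := by
  rcases Nat.eq_zero_or_pos p with rfl | hp
  · simp
  have hpow : (p : ZMod q) ^ n = 1 := by
    have hsum : ((∑ i ∈ range n, p ^ i : ℕ) : ZMod q) = 0 :=
      (ZMod.natCast_eq_zero_iff _ q).mpr hdvd
    push_cast at hsum
    rw [← sub_eq_zero, ← geom_sum_mul, hsum, zero_mul]
  have hone : (p : ZMod q) = 1 := ZMod.eq_one_of_pow_eq_one_of_coprime hn hcop hpow
  rw [← ZMod.natCast_eq_zero_iff, Nat.cast_sub hp, hone]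
  simp

lemma padicValNat_geom_sum {p q n : ℕ} [Fact q.Prime] (hq : Odd q) (hp : 1 < p) (hn : n ≠ 0)
    (hdvd : q ∣ p - 1) : padicValNat q (∑ i ∈ range n, p ^ i) = padicValNat q n := by
  have hqp : ¬ q ∣ p := fun h ↦ (Fact.out : q.Prime).one_lt.ne' <|
    Nat.dvd_one.mp (by simpa [Nat.sub_sub_self hp.le] using Nat.dvd_sub h hdvd)
  have hlte := padicValNat.pow_sub_pow hq hp (by simpa using hdvd) hqp hn
  have hsum : ∑ i ∈ range n, p ^ i ≠ 0 :=
    (Finset.sum_pos (fun i _ ↦ by positivity) (by simpa using hn)).ne'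
  rw [one_pow, ← geom_sum_mul_of_one_le hp.le, padicValNat.mul hsum (by omega)] at hlte
  omega

lemma self_lt_geom_sum {p n : ℕ} (hp : 1 < p) (hn : 2 ≤ n) : n < ∑ i ∈ range n, p ^ i :=
  calc n = ∑ _i ∈ range n, 1 := by simp
    _ < ∑ i ∈ range n, p ^ i :=
      Finset.sum_lt_sum (fun i _ ↦ Nat.one_le_pow _ _ (by omega))
        ⟨1, Finset.mem_range.mpr (by omega), by simpa using hp⟩

theorem no_sol_even_lambda_general (p q l β : ℕ) (hp : p.Prime)
    (hq : q = 3 ∨ q = 5) (hl : 2 ≤ l) (hle : Even l) (hβ : 1 ≤ β)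
    (heq : ∑ i ∈ Finset.range (l + 1), p ^ i = q ^ β) : False := by
  have hq_prime : q.Prime := by rcases hq with rfl | rfl <;> norm_num
  have := Fact.mk hq_prime
  have hq_odd : Odd q := by rcases hq with rfl | rfl <;> decide
  have hcop : (l + 1).Coprime (q - 1) := by
    have hodd := hle.add_one.coprime_two_right
    rcases hq with rfl | rfl
    exacts [hodd, hodd.pow_right 2]
  have hq_dvd_sum : q ∣ ∑ i ∈ range (l + 1), p ^ i := heq ▸ dvd_pow_self q (by omega)
  have hq_dvd : q ∣ p - 1 := dvd_sub_one_of_dvd_geom_sum (by omega) hcop hq_dvd_sum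
  have hval : padicValNat q (l + 1) = β := by
    rw [← padicValNat_geom_sum hq_odd hp.one_lt (by omega) hq_dvd, heq, padicValNat.prime_pow]
  have hle_succ : q ^ β ≤ l + 1 :=
    Nat.le_of_dvd (by omega) (hval ▸ pow_padicValNat_dvd)
  have hlt := self_lt_geom_sum hp.one_lt (show 2 ≤ l + 1 by omega)
  omega

theorem no_sol_even_lambda (p q l β : ℕ) (hp : p.Prime) (hpodd : Odd p)
    (hq : q = 3 ∨ q = 5) (hl : 2 ≤ l) (hle : Even l) (hβ : 1 ≤ β)
    (heq : ∑ i ∈ Finset.range (l + 1), p ^ i = q ^ β) : False :=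
  no_sol_even_lambda_general p q l β hp hq hl hle hβ heq
end

section
/- Let p be an odd prime and q a prime with (p^(λ+1) - 1)/(p - 1) = q^β for integers λ ≥ 6 and β ≥ 1. Then q ≡ 1 (mod λ+1); in particular q > λ. -/
/-!
Let `n = λ + 1` and let `d` be the order of `p` modulo `q`; it divides `n` because
`q ∣ q ^ β ∣ p ^ n - 1`. If `d < n` then `2 d ≤ n`, and lifting the exponent bounds the `q`-part
of `p ^ n - 1` by `(p ^ d - 1) n` (by `(p ^ 2 - 1) n` when `q = 2`, where `n` is even because a sum
of `n` odd numbers equals `2 ^ β`). Since `p ≥ 3` and `n ≥ 7`, this is smaller than `p ^ λ ≤ q ^ β`, which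
contradicts `q ^ β ∣ p ^ n - 1`. Hence `d = n`, and `n ∣ q - 1` by Fermat's little theorem.
-/

open Finset

lemma ZMod.natCast_eq_one_iff_dvd_sub_one {q a : ℕ} (ha : 1 ≤ a) :
    (a : ZMod q) = 1 ↔ q ∣ a - 1 := by
  rw [← ZMod.natCast_eq_zero_iff, Nat.cast_sub ha, Nat.cast_one, sub_eq_zero]

lemma Nat.even_geom_sum_iff {p : ℕ} (hp : Odd p) (n : ℕ) :
    Even (∑ i ∈ range n, p ^ i) ↔ Even n := by
  induction n with
  | zero => simp
  | succ n ih =>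
    have hpn : ¬Even (p ^ n) := Nat.not_even_iff_odd.mpr hp.pow
    simp [sum_range_succ, Nat.even_add, ih, Nat.even_add_one, hpn]

lemma Nat.two_mul_le_of_dvd_of_lt {e n : ℕ} (h : e ∣ n) (hlt : e < n) : 2 * e ≤ n := by
  obtain ⟨m, rfl⟩ := h
  rcases m with _ | _ | m
  · simp at hlt
  · simp at hlt
  · nlinarith

lemma Nat.mod_eq_one_of_dvd_sub_one {n q : ℕ} (hn : 1 < n) (hq : 1 ≤ q) (h : n ∣ q - 1) :
    q % n = 1 :=
  Eq.trans ((Nat.modEq_iff_dvd' hq).mpr h).symm (Nat.mod_eq_of_lt hn)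

lemma two_mul_add_two_lt_three_pow {k : ℕ} (hk : 2 ≤ k) : 2 * k + 2 < 3 ^ k := by
  induction k, hk using Nat.le_induction with
  | base => norm_num
  | succ k _ ih => rw [pow_succ]; omega

lemma pow_mul_lt_pow_sub_one {p d n : ℕ} (hp : 3 ≤ p) (hd : 2 * d ≤ n) (hn : 7 ≤ n) :
    p ^ d * n < p ^ (n - 1) := by
  have hn_lt : n < 3 ^ (n - 1 - d) :=
    lt_of_le_of_lt (by omega) (two_mul_add_two_lt_three_pow (k := n - 1 - d) (by omega))
  calc p ^ d * n < p ^ d * p ^ (n - 1 - d) :=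
        Nat.mul_lt_mul_of_pos_left (hn_lt.trans_le (Nat.pow_le_pow_left hp _)) (by positivity)
    _ = p ^ (n - 1) := by rw [← pow_add]; congr 1; omega

lemma pow_padicValNat_le {q n : ℕ} (hn : n ≠ 0) : q ^ padicValNat q n ≤ n :=
  Nat.le_of_dvd (Nat.pos_of_ne_zero hn) pow_padicValNat_dvd

lemma pow_padicValNat_pow_sub_one_le {q x k n : ℕ} [Fact q.Prime] (hq : Odd q) (hx : 1 < x)
    (hk : k ∣ n) (hn : n ≠ 0) (hqx : q ∣ x ^ k - 1) :
    q ^ padicValNat q (x ^ n - 1) ≤ (x ^ k - 1) * n := by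
  obtain ⟨m, rfl⟩ := hk
  have hk0 : k ≠ 0 := left_ne_zero_of_mul hn
  have hm0 : m ≠ 0 := right_ne_zero_of_mul hn
  have hxk : 1 < x ^ k := Nat.one_lt_pow hk0 hx
  have hqxk : ¬q ∣ x ^ k := fun h => (Fact.out : q.Prime).one_lt.ne'
    (Nat.eq_one_of_dvd_one (by simpa [Nat.sub_sub_self hxk.le] using Nat.dvd_sub h hqx))
  have hlte := padicValNat.pow_sub_pow hq hxk (by simpa using hqx) hqxk hm0
  rw [one_pow, ← pow_mul] at hlte
  calc q ^ padicValNat q (x ^ (k * m) - 1)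
      = q ^ padicValNat q (x ^ k - 1) * q ^ padicValNat q m := by rw [hlte, pow_add]
    _ ≤ (x ^ k - 1) * m :=
        Nat.mul_le_mul (pow_padicValNat_le (by omega)) (pow_padicValNat_le hm0)
    _ ≤ (x ^ k - 1) * (k * m) := Nat.mul_le_mul_left _ (Nat.le_mul_of_pos_left m (by omega))

lemma two_pow_padicValNat_pow_sub_one_le {x n : ℕ} (hx : 1 < x) (hx_odd : Odd x) (hn : n ≠ 0)
    (hn_even : Even n) : 2 ^ padicValNat 2 (x ^ n - 1) ≤ (x ^ 2 - 1) * n := by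
  have hlte := padicValNat.pow_two_sub_one hx (Nat.two_dvd_ne_zero.mpr (Nat.odd_iff.mp hx_odd))
    hn hn_even
  calc 2 ^ padicValNat 2 (x ^ n - 1)
      ≤ 2 ^ (padicValNat 2 (x ^ n - 1) + 1) := Nat.pow_le_pow_right two_pos (by omega)
    _ = 2 ^ padicValNat 2 (x + 1) * 2 ^ padicValNat 2 (x - 1) * 2 ^ padicValNat 2 n := by
        rw [hlte, pow_add, pow_add]
    _ ≤ (x + 1) * (x - 1) * n :=
        Nat.mul_le_mul (Nat.mul_le_mul (pow_padicValNat_le (by omega))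
          (pow_padicValNat_le (by omega))) (pow_padicValNat_le hn)
    _ = (x ^ 2 - 1) * n := by rw [← Nat.sq_sub_sq, one_pow]

lemma pow_dvd_pow_sub_one_of_geom_sum_eq {p q n β : ℕ} (hp : 1 ≤ p)
    (h : ∑ i ∈ range n, p ^ i = q ^ β) : q ^ β ∣ p ^ n - 1 :=
  ⟨p - 1, by rw [← h, geom_sum_mul_of_one_le hp]⟩

lemma pow_sub_one_le_pow_padicValNat_of_geom_sum_eq {p q n β : ℕ} [Fact q.Prime] (hp : 1 < p)
    (hn : n ≠ 0) (h : ∑ i ∈ range n, p ^ i = q ^ β) :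
    p ^ (n - 1) ≤ q ^ padicValNat q (p ^ n - 1) := by
  have hβ : β ≤ padicValNat q (p ^ n - 1) :=
    (padicValNat_dvd_iff_le (Nat.sub_ne_zero_of_lt (Nat.one_lt_pow hn hp))).mp
      (pow_dvd_pow_sub_one_of_geom_sum_eq hp.le h)
  calc p ^ (n - 1) ≤ q ^ β :=
        h ▸ single_le_sum (fun i _ => Nat.zero_le (p ^ i)) (mem_range.mpr (by omega))
    _ ≤ q ^ padicValNat q (p ^ n - 1) := Nat.pow_le_pow_right (Fact.out : q.Prime).pos hβ

lemma sub_one_mul_lt_pow_padicValNat_of_geom_sum_eq {p q n β e : ℕ} [Fact q.Prime] (hp : 3 ≤ p)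
    (hn : 7 ≤ n) (he : 2 * e ≤ n) (h : ∑ i ∈ range n, p ^ i = q ^ β) :
    (p ^ e - 1) * n < q ^ padicValNat q (p ^ n - 1) :=
  calc (p ^ e - 1) * n ≤ p ^ e * n := Nat.mul_le_mul_right _ (Nat.sub_le _ _)
    _ < p ^ (n - 1) := pow_mul_lt_pow_sub_one hp he hn
    _ ≤ _ := pow_sub_one_le_pow_padicValNat_of_geom_sum_eq (by omega) (by omega) h

theorem q_cong_one_mod (p q l β : ℕ) (hp : p.Prime) (hpodd : Odd p)
    (hq : q.Prime) (hl : 6 ≤ l) (hβ : 1 ≤ β)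
    (heq : ∑ i ∈ Finset.range (l + 1), p ^ i = q ^ β) :
    q % (l + 1) = 1 ∧ l < q := by
  have : Fact q.Prime := ⟨hq⟩
  have hp3 : 3 ≤ p := by have := hp.two_le; rcases hpodd with ⟨m, rfl⟩; omega
  have hq_odd : Odd q := by
    refine hq.eq_two_or_odd'.resolve_left fun hq2 => ?_
    subst hq2
    have hn_even : Even (l + 1) := by
      rw [← Nat.even_geom_sum_iff hpodd, heq]
      exact (Nat.even_pow' (by omega)).mpr even_two
    exact (sub_one_mul_lt_pow_padicValNat_of_geom_sum_eq hp3 (by omega) (by omega) heq).not_ge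
      (two_pow_padicValNat_pow_sub_one_le hp.one_lt hpodd (by omega) hn_even)
  have hpow : (p : ZMod q) ^ (l + 1) = 1 := by
    rw [← Nat.cast_pow, ZMod.natCast_eq_one_iff_dvd_sub_one (Nat.one_le_pow _ _ hp.pos)]
    exact (dvd_pow_self q (by omega)).trans (pow_dvd_pow_sub_one_of_geom_sum_eq hp.one_le heq)
  have hdn : orderOf (p : ZMod q) ∣ l + 1 := orderOf_dvd_of_pow_eq_one hpow
  have hord : orderOf (p : ZMod q) = l + 1 := by
    refine (Nat.le_of_dvd (by omega) hdn).eq_of_not_lt fun hlt =>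
      (sub_one_mul_lt_pow_padicValNat_of_geom_sum_eq hp3 (by omega)
        (Nat.two_mul_le_of_dvd_of_lt hdn hlt) heq).not_ge
        (pow_padicValNat_pow_sub_one_le hq_odd hp.one_lt hdn (by omega) ?_)
    rw [← ZMod.natCast_eq_one_iff_dvd_sub_one (Nat.one_le_pow _ _ hp.pos), Nat.cast_pow]
    exact pow_orderOf_eq_one _
  have hn : l + 1 ∣ q - 1 :=
    hord ▸ ZMod.orderOf_dvd_card_sub_one (ne_zero_pow (by omega) (hpow ▸ one_ne_zero))
  exact ⟨Nat.mod_eq_one_of_dvd_sub_one (by omega) hq.one_le hn,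
    by have := Nat.le_of_dvd (Nat.sub_pos_of_lt hq.one_lt) hn; omega⟩
end

section
/- If N is an odd perfect number and q^α exactly divides N with q prime, then σ(N/q^α)/q^α ≠ 2. -/
open ArithmeticFunction Finset
open scoped ArithmeticFunction.sigma

/-!
Write `m = N / q ^ α`. Since `σ(q^α) ≡ 1 (mod q)` is prime to `q`, the perfect-number identity
`σ(q^α) σ(m) = 2 q^α m` together with `σ(m) / q^α = 2` forces `σ(m) = 2 q^α`, and then
`m = σ(q^α) ≡ 1 (mod q)`.

On the other hand, let `m` be odd with `σ(m) ∣ 2 q^C`. For a prime power `r^n ∥ m` either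
`σ(r^n)` is odd, so `n` is even and `q ∣ σ(r^n)` gives `r^(n+1) ≡ 1`, or `n` is odd and
`σ(r^n) = (r + 1)(1 + r^2 + ⋯ + r^(n-1))` makes `(r + 1)/2` a power of `q`, so `r ≡ -1`.
Multiplying over the prime powers, `m^E ≡ (-1)^(v₂ σ(m)) (mod q)` for some odd `E`. For
`σ(m) = 2 q^α` this reads `1 ≡ -1 (mod q)`, impossible for odd `q`.
-/

lemma odd_geom_sum_iff {r : ℕ} (hr : Odd r) (n : ℕ) :
    Odd (∑ i ∈ range n, r ^ i) ↔ Odd n := by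
  rw [odd_sum_iff_odd_card_odd, filter_true_of_mem fun i _ ↦ hr.pow, card_range]

lemma geom_sum_two_mul {R : Type*} [CommSemiring R] (x : R) (w : ℕ) :
    ∑ i ∈ range (2 * w), x ^ i = (x + 1) * ∑ j ∈ range w, (x ^ 2) ^ j := by
  induction w with
  | zero => simp
  | succ w ih =>
    rw [mul_add_one, sum_range_succ, sum_range_succ, ih, sum_range_succ]
    ring

lemma ZMod.pow_eq_one_of_dvd_geom_sum {q r n : ℕ} (h : q ∣ ∑ i ∈ range n, r ^ i) :
    (r : ZMod q) ^ n = 1 := by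
  have h0 : ((∑ i ∈ range n, r ^ i : ℕ) : ZMod q) = 0 := (ZMod.natCast_eq_zero_iff _ _).2 h
  push_cast at h0
  rw [← sub_eq_zero, ← geom_sum_mul, h0, zero_mul]

lemma Nat.Prime.dvd_of_one_lt_of_dvd_pow {q d C : ℕ} (hq : q.Prime) (hd : 1 < d)
    (h : d ∣ q ^ C) : q ∣ d := by
  obtain ⟨i, -, rfl⟩ := (Nat.dvd_prime_pow hq).1 h
  exact dvd_pow_self q (by rintro rfl; simp at hd)

lemma padicValNat_two_mul_of_odd {u : ℕ} (hu : Odd u) : padicValNat 2 (2 * u) = 1 := by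
  rw [padicValNat.mul two_ne_zero hu.pos.ne', padicValNat_self,
    padicValNat.eq_zero_of_not_dvd (by simpa [← even_iff_two_dvd] using hu)]

lemma sigma_one_prime_pow_modEq_one {p : ℕ} (hp : p.Prime) (k : ℕ) :
    σ 1 (p ^ k) ≡ 1 [MOD p] := by
  rw [sigma_one_apply_prime_pow hp, geom_sum_succ]
  simp [Nat.ModEq]

lemma exists_odd_pow_eq_neg_one_pow_of_sigma_prime_pow_dvd {q r n C : ℕ} (hq : q.Prime)
    (hq_odd : Odd q) (hr : r.Prime) (hr_odd : Odd r)
    (hn : 0 < n) (h : σ 1 (r ^ n) ∣ 2 * q ^ C) :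
    ∃ E, Odd E ∧ ((r ^ n : ℕ) : ZMod q) ^ E = (-1) ^ padicValNat 2 (σ 1 (r ^ n)) := by
  rw [sigma_one_apply_prime_pow hr] at h ⊢
  by_cases hσ : Odd (∑ i ∈ range (n + 1), r ^ i)
  · have hσ_dvd : ∑ i ∈ range (n + 1), r ^ i ∣ q ^ C :=
      (Nat.coprime_two_right.2 hσ).dvd_of_dvd_mul_left h
    have hσ_gt : 1 < ∑ i ∈ range (n + 1), r ^ i := by
      rw [geom_sum_succ']
      exact (Nat.one_lt_pow hn.ne' hr.one_lt).trans_le (Nat.le_add_right _ _)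
    refine ⟨n + 1, (odd_geom_sum_iff hr_odd _).1 hσ, ?_⟩
    rw [padicValNat.eq_zero_of_not_dvd (by simpa [← even_iff_two_dvd] using hσ), pow_zero,
      Nat.cast_pow, ← pow_mul, mul_comm, pow_mul,
      ZMod.pow_eq_one_of_dvd_geom_sum (hq.dvd_of_one_lt_of_dvd_pow hσ_gt hσ_dvd), one_pow]
  · obtain ⟨w, hw⟩ : Even (n + 1) := by rwa [odd_geom_sum_iff hr_odd, Nat.not_odd_iff_even] at hσ
    obtain ⟨t, ht⟩ := hr_odd.add_one
    rw [← two_mul] at hw ht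
    rw [hw, geom_sum_two_mul, ht, mul_assoc] at h ⊢
    have hdvd : t * ∑ j ∈ range w, (r ^ 2) ^ j ∣ q ^ C := Nat.dvd_of_mul_dvd_mul_left two_pos h
    have hq_dvd : q ∣ r + 1 :=
      (hq.dvd_of_one_lt_of_dvd_pow (by have := hr.two_le; omega)
        (dvd_of_mul_right_dvd hdvd)).trans ⟨2, by omega⟩
    have hr_neg : (r : ZMod q) = -1 := by
      rw [eq_neg_iff_add_eq_zero]
      exact_mod_cast (ZMod.natCast_eq_zero_iff _ _).2 hq_dvd
    refine ⟨1, odd_one, ?_⟩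
    rw [padicValNat_two_mul_of_odd (hq_odd.pow.of_dvd_nat hdvd), pow_one, pow_one, Nat.cast_pow,
      hr_neg, Odd.neg_one_pow ⟨w - 1, by omega⟩]

theorem exists_odd_pow_eq_neg_one_pow_of_sigma_dvd {q m C : ℕ} (hq : q.Prime) (hq_odd : Odd q)
    (hm : Odd m) (h : σ 1 m ∣ 2 * q ^ C) :
    ∃ E, Odd E ∧ (m : ZMod q) ^ E = (-1) ^ padicValNat 2 (σ 1 m) := by
  induction m using Nat.recOnPosPrimePosCoprime with
  | zero => simp at hm
  | one => exact ⟨1, odd_one, by simp⟩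
  | prime_pow r n hr hn =>
    exact exists_odd_pow_eq_neg_one_pow_of_sigma_prime_pow_dvd hq hq_odd hr
      ((Nat.odd_pow_iff hn.ne').1 hm) hn h
  | coprime a b _ _ hab iha ihb =>
    rw [isMultiplicative_sigma.map_mul_of_coprime hab] at h ⊢
    obtain ⟨ha, hb⟩ := Nat.odd_mul.1 hm
    obtain ⟨E, hE, haE⟩ := iha ha (dvd_of_mul_right_dvd h)
    obtain ⟨F, hF, hbF⟩ := ihb hb (dvd_of_mul_left_dvd h)
    refine ⟨E * F, hE.mul hF, ?_⟩
    rw [padicValNat.mul (sigma_pos 1 a ha.pos.ne').ne' (sigma_pos 1 b hb.pos.ne').ne', pow_add,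
      Nat.cast_mul, mul_pow, pow_mul, haE, mul_comm E, pow_mul, hbF, pow_right_comm,
      hF.neg_one_pow, pow_right_comm, hE.neg_one_pow]

lemma sigma_eq_two_mul_pow_and_sigma_pow_eq {q α m : ℕ} (hq : q.Prime)
    (hσ : σ 1 (q ^ α) * σ 1 m = 2 * (q ^ α * m)) (h2 : σ 1 m / q ^ α = 2) :
    σ 1 m = 2 * q ^ α ∧ σ 1 (q ^ α) = m := by
  have hcop : (q ^ α).Coprime (σ 1 (q ^ α)) := (hq.coprime_pow_of_not_dvd <|
    mt ((sigma_one_prime_pow_modEq_one hq α).dvd_iff dvd_rfl).1 hq.not_dvd_one).symm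
  have hdvd : q ^ α ∣ σ 1 m := hcop.dvd_of_dvd_mul_left ⟨2 * m, by rw [hσ]; ring⟩
  have hσm : σ 1 m = 2 * q ^ α := by rw [Nat.eq_mul_of_div_eq_right hdvd h2, mul_comm]
  refine ⟨hσm, Nat.eq_of_mul_eq_mul_left (Nat.mul_pos two_pos (pow_pos hq.pos α)) ?_⟩
  rw [hσm] at hσ
  linarith

theorem opn_ratio_ne_two (N q α : ℕ) (hN : N.Perfect) (hNodd : Odd N)
    (hq : q.Prime) (hα : 1 ≤ α)
    (hdvd : q ^ α ∣ N) (hndvd : ¬ q ^ (α + 1) ∣ N) :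
    (ArithmeticFunction.sigma 1 (N / q ^ α)) / q ^ α ≠ 2 := by
  intro h2
  have hq_odd : Odd q := hNodd.of_dvd_nat ((dvd_pow_self q (by omega)).trans hdvd)
  set m := N / q ^ α
  have hN_eq : q ^ α * m = N := Nat.mul_div_cancel' hdvd
  have hq_dvd_m : ¬ q ∣ m := fun h ↦ hndvd (hN_eq ▸ pow_succ q α ▸ mul_dvd_mul_left _ h)
  have hcop : (q ^ α).Coprime m := (hq.coprime_pow_of_not_dvd hq_dvd_m).symm
  have hσN : σ 1 (q ^ α) * σ 1 m = 2 * (q ^ α * m) := by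
    rw [← isMultiplicative_sigma.map_mul_of_coprime hcop, hN_eq, sigma_one_apply,
      (Nat.perfect_iff_sum_divisors_eq_two_mul hN.2).1 hN]
  obtain ⟨hσm, hσq_eq⟩ := sigma_eq_two_mul_pow_and_sigma_pow_eq hq hσN h2
  obtain ⟨E, -, hmE⟩ := exists_odd_pow_eq_neg_one_pow_of_sigma_dvd hq hq_odd
    (hNodd.of_dvd_nat (Dvd.intro_left _ hN_eq)) hσm.dvd
  have hm_one : (m : ZMod q) = 1 := by
    rw [← hσq_eq]
    exact_mod_cast (ZMod.natCast_eq_natCast_iff _ _ _).2 (sigma_one_prime_pow_modEq_one hq α)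
  rw [hm_one, hσm, padicValNat_two_mul_of_odd hq_odd.pow, one_pow, pow_one] at hmE
  have : Fact (2 < q) := ⟨by obtain ⟨k, rfl⟩ := hq_odd; have := hq.two_le; omega⟩
  exact ZMod.neg_one_ne_one hmE.symm
end

section
/- If N is an odd perfect number and q^α exactly divides N with q prime, then σ(N/q^α)/q^α is an odd integer or twice an odd integer; in particular 4 does not divide σ(N/q^α)/q^α. -/
/-!
Write `N = q^α m` with `q ∤ m`. Multiplicativity of `σ` and perfection give
`σ(q^α) σ(m) = 2 q^α m`, and `σ(q^α) ≡ 1 (mod q)` is prime to `q^α`, so `q^α ∣ σ(m)` and the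
quotient `r = σ(m)/q^α` satisfies `σ(q^α) r = 2m`. Hence `r ∣ 2m` with `m` odd, so `4 ∤ r`.
-/

open ArithmeticFunction
open scoped ArithmeticFunction.sigma

theorem Nat.Prime.coprime_sigma_one_pow {q : ℕ} (hq : q.Prime) (α : ℕ) :
    Nat.Coprime q (σ 1 (q ^ α)) := by
  rw [hq.coprime_iff_not_dvd, sigma_one_apply_prime_pow hq, Finset.sum_range_succ', pow_zero]
  intro h
  have hsum : q ∣ ∑ k ∈ Finset.range α, q ^ (k + 1) :=
    Finset.dvd_sum fun k _ => dvd_pow_self q k.succ_ne_zero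
  exact hq.not_dvd_one ((Nat.dvd_add_right hsum).mp h)

theorem Nat.Perfect.sigma_one_mul_sigma_one {a b : ℕ} (hab : Nat.Coprime a b)
    (hperf : (a * b).Perfect) : σ 1 a * σ 1 b = 2 * (a * b) := by
  rw [← isMultiplicative_sigma.map_mul_of_coprime hab, sigma_one_apply]
  exact (Nat.perfect_iff_sum_divisors_eq_two_mul hperf.2).mp hperf

theorem Nat.coprime_pow_div_pow_of_not_pow_succ_dvd {q α N : ℕ} (hq : q.Prime)
    (hdvd : q ^ α ∣ N) (hndvd : ¬ q ^ (α + 1) ∣ N) : Nat.Coprime (q ^ α) (N / q ^ α) := by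
  refine Nat.Coprime.pow_left α ((hq.coprime_iff_not_dvd).mpr fun h => hndvd ?_)
  rw [pow_succ, ← Nat.mul_div_cancel' hdvd]
  exact mul_dvd_mul_left _ h

theorem Nat.Perfect.sigma_one_div_pow_dvd {N q α : ℕ} (hN : N.Perfect) (hq : q.Prime)
    (hdvd : q ^ α ∣ N) (hndvd : ¬ q ^ (α + 1) ∣ N) :
    σ 1 (N / q ^ α) / q ^ α ∣ 2 * (N / q ^ α) := by
  set m := N / q ^ α
  have hN' : (q ^ α * m).Perfect := by rwa [Nat.mul_div_cancel' hdvd]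
  have hkey : σ 1 (q ^ α) * σ 1 m = q ^ α * (2 * m) := by
    rw [hN'.sigma_one_mul_sigma_one (Nat.coprime_pow_div_pow_of_not_pow_succ_dvd hq hdvd hndvd)]
    ring
  have hq_dvd : q ^ α ∣ σ 1 m :=
    ((hq.coprime_sigma_one_pow α).pow_left α).dvd_of_dvd_mul_left ⟨2 * m, hkey⟩
  refine ⟨σ 1 (q ^ α), Nat.eq_of_mul_eq_mul_left (pow_pos hq.pos α) ?_⟩
  rw [← hkey, ← mul_assoc, Nat.mul_div_cancel' hq_dvd, mul_comm]

theorem odd_or_two_mul_odd_of_dvd_two_mul_odd {r m : ℕ} (hr : r ∣ 2 * m) (hm : Odd m) :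
    Odd r ∨ ∃ t : ℕ, Odd t ∧ r = 2 * t := by
  rcases Nat.even_or_odd r with ⟨t, rfl⟩ | hodd
  · rw [← two_mul] at hr ⊢
    exact Or.inr ⟨t, hm.of_dvd_nat (Nat.dvd_of_mul_dvd_mul_left two_pos hr), rfl⟩
  · exact Or.inl hodd

theorem not_four_dvd_of_dvd_two_mul_odd {r m : ℕ} (hr : r ∣ 2 * m) (hm : Odd m) : ¬ 4 ∣ r := by
  intro h4
  obtain ⟨k, hk⟩ := h4.trans hr
  obtain ⟨j, rfl⟩ := hm
  omega

theorem opn_ratio_not_four_dvd_general (N q α : ℕ) (hN : N.Perfect) (hNodd : Odd N)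
    (hq : q.Prime)
    (hdvd : q ^ α ∣ N) (hndvd : ¬ q ^ (α + 1) ∣ N) :
    (Odd ((ArithmeticFunction.sigma 1 (N / q ^ α)) / q ^ α) ∨
      ∃ t : ℕ, Odd t ∧ (ArithmeticFunction.sigma 1 (N / q ^ α)) / q ^ α = 2 * t) ∧
    ¬ 4 ∣ (ArithmeticFunction.sigma 1 (N / q ^ α)) / q ^ α := by
  have hr := hN.sigma_one_div_pow_dvd hq hdvd hndvd
  have hm : Odd (N / q ^ α) := hNodd.of_dvd_nat (Nat.div_dvd_of_dvd hdvd)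
  exact ⟨odd_or_two_mul_odd_of_dvd_two_mul_odd hr hm, not_four_dvd_of_dvd_two_mul_odd hr hm⟩

theorem opn_ratio_not_four_dvd (N q α : ℕ) (hN : N.Perfect) (hNodd : Odd N)
    (hq : q.Prime) (hα : 1 ≤ α)
    (hdvd : q ^ α ∣ N) (hndvd : ¬ q ^ (α + 1) ∣ N) :
    (Odd ((ArithmeticFunction.sigma 1 (N / q ^ α)) / q ^ α) ∨
      ∃ t : ℕ, Odd t ∧ (ArithmeticFunction.sigma 1 (N / q ^ α)) / q ^ α = 2 * t) ∧
    ¬ 4 ∣ (ArithmeticFunction.sigma 1 (N / q ^ α)) / q ^ α :=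
  opn_ratio_not_four_dvd_general N q α hN hNodd hq hdvd hndvd
end
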